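/- arXiv:1805.03730 — 2 statements merged into one kernel-verified Lean document; each statement's English description precedes it below -/
import Mathlib

section
/- Let Z be a finite alphabet with q := |Z| ≥ 2, let Ω be a finite set, and let C : Ω → List Z be an injective map all of whose codewords are nonempty strings. Writing ℓ_w := length(C(w)), the modified lengths satisfy Kraft's inequality: ∑_{w ∈ Ω} q^{−(ℓ_w + 2·⌊log_q(ℓ_w + q − 1)⌋)} ≤ 1. -/
/-!
There are at most `q ^ ℓ` codewords of length `ℓ`, so the sum is at most
`∑_{ℓ ≥ 1} q ^ (-2 k(ℓ))` with `k(ℓ) = ⌊log_q (ℓ + q - 1)⌋`. Substituting `m = ℓ + q - 1 ≥ q`,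
the `m` with `⌊log_q m⌋ = k` fill the interval `[q ^ k, q ^ (k + 1))` of size `(q - 1) q ^ k`,
so the block `k ≥ 1` contributes at most `(q - 1) q ^ (-k)`, and these add up to at most `1`.
-/

open Finset

lemma card_filter_length_eq_le {Z Ω : Type*} [Fintype Z] [Fintype Ω] {C : Ω → List Z}
    (hC : Function.Injective C) (n : ℕ) :
    #{w | (C w).length = n} ≤ Fintype.card Z ^ n := by
  rw [← Fintype.card_subtype, ← card_vector]
  exact Fintype.card_le_of_injective (fun w => ⟨C w.1, w.2⟩)
    fun _ _ h => Subtype.ext (hC (congrArg Subtype.val h))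

lemma sum_length_le_sum_card_pow_mul {Z Ω : Type*} [Fintype Z] [Fintype Ω]
    {C : Ω → List Z} (hC : Function.Injective C) {f : ℕ → ℝ} (hf : ∀ n, 0 ≤ f n) :
    ∑ w, f (C w).length ≤
      ∑ n ∈ univ.image (fun w => (C w).length), (Fintype.card Z : ℝ) ^ n * f n := by
  rw [sum_comp]
  refine sum_le_sum fun n _ => ?_
  rw [nsmul_eq_mul]
  gcongr
  · exact hf n
  · exact_mod_cast card_filter_length_eq_le hC n

lemma card_filter_log_eq_le {b k : ℕ} (hk : k ≠ 0) (t : Finset ℕ) :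
    #{m ∈ t | Nat.log b m = k} ≤ (b - 1) * b ^ k := by
  calc #{m ∈ t | Nat.log b m = k}
      ≤ #(Ico (b ^ k) (b ^ (k + 1))) := by
        refine card_le_card fun m hm => ?_
        rw [mem_filter, Nat.log_eq_iff (Or.inl hk)] at hm
        exact mem_Ico.mpr hm.2
    _ = (b - 1) * b ^ k := by
        rw [Nat.card_Ico, pow_succ, mul_comm, Nat.sub_one_mul]

lemma sum_inv_pow_two_mul_log_le_one {b : ℕ} (hb : 2 ≤ b) {t : Finset ℕ}
    (ht : ∀ m ∈ t, b ≤ m) :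
    ∑ m ∈ t, ((b : ℝ) ^ (2 * Nat.log b m))⁻¹ ≤ 1 := by
  set K := t.sup (Nat.log b)
  have hb1 : (1 : ℝ) < b := by exact_mod_cast hb
  have hmaps : ∀ m ∈ t, Nat.log b m ∈ Ico 1 (K + 1) := fun m hm =>
    mem_Ico.mpr ⟨Nat.log_pos hb (ht m hm), Nat.lt_succ_of_le (le_sup hm)⟩
  calc ∑ m ∈ t, ((b : ℝ) ^ (2 * Nat.log b m))⁻¹
      = ∑ k ∈ Ico 1 (K + 1), #{m ∈ t | Nat.log b m = k} * ((b : ℝ) ^ (2 * k))⁻¹ := by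
        rw [← sum_fiberwise_of_maps_to hmaps]
        refine sum_congr rfl fun k _ => ?_
        rw [← nsmul_eq_mul, ← sum_const]
        exact sum_congr rfl fun m hm => by rw [(mem_filter.mp hm).2]
    _ ≤ ∑ k ∈ Ico 1 (K + 1), ((b : ℝ) - 1) * (b : ℝ)⁻¹ ^ k := by
        refine sum_le_sum fun k hk => ?_
        have hk0 : k ≠ 0 := by have := (mem_Ico.mp hk).1; omega
        have hcard : (#{m ∈ t | Nat.log b m = k} : ℝ) ≤ ((b : ℝ) - 1) * b ^ k := by
          have := card_filter_log_eq_le (b := b) hk0 t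
          rw [← Nat.cast_pred (by omega : 0 < b)]
          exact_mod_cast this
        calc (#{m ∈ t | Nat.log b m = k} : ℝ) * ((b : ℝ) ^ (2 * k))⁻¹
            ≤ ((b : ℝ) - 1) * b ^ k * ((b : ℝ) ^ (2 * k))⁻¹ := by gcongr
          _ = ((b : ℝ) - 1) * (b : ℝ)⁻¹ ^ k := by
            rw [two_mul, pow_add, inv_pow]
            field_simp
    _ = ((b : ℝ) - 1) * ∑ k ∈ Ico 1 (K + 1), (b : ℝ)⁻¹ ^ k := by rw [mul_sum]
    _ ≤ ((b : ℝ) - 1) * ((b : ℝ)⁻¹ ^ 1 / (1 - (b : ℝ)⁻¹)) := by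
        gcongr
        exact geom_sum_Ico_le_of_lt_one (by positivity) (inv_lt_one_of_one_lt₀ hb1)
    _ = 1 := by
        have : (b : ℝ) - 1 ≠ 0 := by linarith
        field_simp

lemma zpow_neg_add_two_mul_floor_logb {q ℓ : ℕ} (h : 1 ≤ ℓ + q) :
    (q : ℝ) ^ (-((ℓ : ℤ) + 2 * ⌊Real.logb q ((ℓ : ℝ) + q - 1)⌋)) =
      ((q : ℝ) ^ (ℓ + 2 * Nat.log q (ℓ + q - 1)))⁻¹ := by
  have hcast : (ℓ : ℝ) + q - 1 = ((ℓ + q - 1 : ℕ) : ℝ) := by push_cast [Nat.cast_sub h]; ring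
  rw [hcast, Real.floor_logb_natCast (Nat.cast_nonneg _), Int.log_natCast, zpow_neg]
  norm_cast

/-- Modified lengths of a non-singular code satisfy Kraft's inequality. -/
theorem stmt_1 {Z Ω : Type*} [Fintype Z] [Fintype Ω]
    (hq : 2 ≤ Fintype.card Z)
    (C : Ω → List Z) (hC : Function.Injective C) (hne : ∀ w, C w ≠ []) :
    ∑ w : Ω, (Fintype.card Z : ℝ) ^
        (-(((C w).length : ℤ) +
            2 * ⌊Real.logb (Fintype.card Z)
                  (((C w).length : ℝ) + (Fintype.card Z : ℝ) - 1)⌋)) ≤ 1 := by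
  set q := Fintype.card Z
  have hlen : ∀ w, 1 ≤ (C w).length := fun w => List.length_pos_iff.mpr (hne w)
  have hq1 : 1 ≤ q := by omega
  set s := univ.image fun w => (C w).length
  have hs : ∀ n ∈ s, 1 ≤ n := by
    intro n hn
    obtain ⟨w, -, rfl⟩ := mem_image.mp hn
    exact hlen w
  calc ∑ w, (q : ℝ) ^ (-(((C w).length : ℤ) + 2 * ⌊Real.logb q (((C w).length : ℝ) + q - 1)⌋))
      = ∑ w, ((q : ℝ) ^ ((C w).length + 2 * Nat.log q ((C w).length + q - 1)))⁻¹ :=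
        sum_congr rfl fun w _ => zpow_neg_add_two_mul_floor_logb (by linarith [hlen w])
    _ ≤ ∑ n ∈ s, (q : ℝ) ^ n * ((q : ℝ) ^ (n + 2 * Nat.log q (n + q - 1)))⁻¹ :=
        sum_length_le_sum_card_pow_mul hC
          (f := fun n => ((q : ℝ) ^ (n + 2 * Nat.log q (n + q - 1)))⁻¹) fun n => by positivity
    _ = ∑ m ∈ s.image (· + q - 1), ((q : ℝ) ^ (2 * Nat.log q m))⁻¹ := by
        rw [sum_image (g := fun n => n + q - 1) fun a _ b _ hab => by simp only at hab; omega]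
        refine sum_congr rfl fun n _ => ?_
        have : (q : ℝ) ≠ 0 := by positivity
        rw [pow_add]
        field_simp
    _ ≤ 1 := sum_inv_pow_two_mul_log_le_one hq fun m hm => by
        obtain ⟨n, hn, rfl⟩ := mem_image.mp hm
        have := hs n hn
        omega
end

section
/- Let f0 : GF(3)³ → GF(3) be defined by f0(x1, x2, 0) = x1 − x2, f0(x1, x2, 1) = 1 if (x1, x2) = (2, 0) and 0 otherwise, and f0(x1, x2, 2) = 0 if (x1, x2) = (0, 2) and 1 otherwise. For any zero-error code for f0 with block length k, with (X1, X2, X3) uniformly distributed on (GF(3)^k)³, Z1 := φ1(X1, φ31(X3)), Z2 := φ2(X2, φ32(X3)), and F0 := f0^k(X1, X2, X3), one has H((Z1, Z2) | F0, X3) ≥ k·(8/9 + (1/3)·log₂ 3). -/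
open Classical

/-- A zero-error (variable-length) code for computing `f` componentwise with block length `k`
on the diamond network: encoders `phi31, phi32` (from `s₃`), `phi1, phi2` (to the terminal)
and a decoder `psi` that recovers `f^k` with zero error. -/
structure ZECode (A B Z : Type*) (k : ℕ) (f : A → A → A → B) where
  phi31 : (Fin k → A) → List Z
  phi32 : (Fin k → A) → List Z
  phi1 : (Fin k → A) → List Z → List Z
  phi2 : (Fin k → A) → List Z → List Z
  psi : List Z → List Z → (Fin k → B)
  zero_error : ∀ x1 x2 x3 : Fin k → A,
    psi (phi1 x1 (phi31 x3)) (phi2 x2 (phi32 x3)) = fun i => f (x1 i) (x2 i) (x3 i)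

/-- Base-2 Shannon entropy of the random variable `W` when the underlying finite sample
space `Ω` carries the uniform distribution (convention `0·log(1/0) = 0`). -/
noncomputable def uH {Ω S : Type*} [Fintype Ω] (W : Ω → S) : ℝ :=
  ∑ s ∈ Finset.univ.image W,
    (((Finset.univ.filter fun ω => W ω = s).card : ℝ) / (Fintype.card Ω : ℝ)) *
      Real.logb 2 ((Fintype.card Ω : ℝ) / ((Finset.univ.filter fun ω => W ω = s).card : ℝ))

/-- Base-2 conditional Shannon entropy `H(W | V)` for the uniform distribution on `Ω`:
`H(W|V) = ∑_v P(V = v) · H(W | V = v)`, with the convention `0·log(1/0) = 0`. -/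
noncomputable def uCondH {Ω S T : Type*} [Fintype Ω] (W : Ω → S) (V : Ω → T) : ℝ :=
  ∑ v ∈ Finset.univ.image V, ∑ s ∈ Finset.univ.image W,
    (((Finset.univ.filter fun ω => W ω = s ∧ V ω = v).card : ℝ) / (Fintype.card Ω : ℝ)) *
      Real.logb 2 (((Finset.univ.filter fun ω => V ω = v).card : ℝ) /
        ((Finset.univ.filter fun ω => W ω = s ∧ V ω = v).card : ℝ))

/-- `x1 ≡^{a3} y1 |₁` : `f(x1, x2, a3) = f(y1, x2, a3)` for all `x2`. -/
def eqv1 {A B : Type*} (f : A → A → A → B) (a3 : A) (x y : A) : Prop :=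
  ∀ x2, f x x2 a3 = f y x2 a3

/-- `x2 ≡^{a3} y2 |₂` : `f(x1, x2, a3) = f(x1, y2, a3)` for all `x1`. -/
def eqv2 {A B : Type*} (f : A → A → A → B) (a3 : A) (x y : A) : Prop :=
  ∀ x1, f x1 x a3 = f x1 y a3

/-- Componentwise extension of `≡^{a3}|₁` to blocks of length `k`. -/
def eqv1k {A B : Type*} (f : A → A → A → B) {k : ℕ} (a3 : Fin k → A) (x y : Fin k → A) : Prop :=
  ∀ i, eqv1 f (a3 i) (x i) (y i)

/-- Componentwise extension of `≡^{a3}|₂` to blocks of length `k`. -/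
def eqv2k {A B : Type*} (f : A → A → A → B) {k : ℕ} (a3 : Fin k → A) (x y : Fin k → A) : Prop :=
  ∀ i, eqv2 f (a3 i) (x i) (y i)

/-- `≡^{a3}|₁` as a setoid on `A`. -/
def eqv1Setoid {A B : Type*} (f : A → A → A → B) (a3 : A) : Setoid A where
  r := eqv1 f a3
  iseqv := ⟨fun _ _ => rfl, fun h x2 => (h x2).symm, fun h h' x2 => (h x2).trans (h' x2)⟩

/-- `≡^{a3}|₂` as a setoid on `A`. -/
def eqv2Setoid {A B : Type*} (f : A → A → A → B) (a3 : A) : Setoid A where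
  r := eqv2 f a3
  iseqv := ⟨fun _ _ => rfl, fun h x1 => (h x1).symm, fun h h' x1 => (h x1).trans (h' x1)⟩

/-- `≡^{a3}|₁` as a setoid on `A^k`. -/
def eqv1kSetoid {A B : Type*} (f : A → A → A → B) {k : ℕ} (a3 : Fin k → A) :
    Setoid (Fin k → A) where
  r := eqv1k f a3
  iseqv := ⟨fun _ _ _ => rfl, fun h i x2 => (h i x2).symm,
    fun h h' i x2 => (h i x2).trans (h' i x2)⟩

/-- `≡^{a3}|₂` as a setoid on `A^k`. -/
def eqv2kSetoid {A B : Type*} (f : A → A → A → B) {k : ℕ} (a3 : Fin k → A) :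
    Setoid (Fin k → A) where
  r := eqv2k f a3
  iseqv := ⟨fun _ _ _ => rfl, fun h i x1 => (h i x1).symm,
    fun h h' i x1 => (h i x1).trans (h' i x1)⟩

/-- The example demand function `f0 : GF(3)³ → GF(3)` of Table I:
`f0(x1, x2, 0) = x1 - x2`; `f0(x1, x2, 1) = 1` iff `(x1, x2) = (2, 0)` else `0`;
`f0(x1, x2, 2) = 0` iff `(x1, x2) = (0, 2)` else `1`. -/
def f0 (x1 x2 x3 : ZMod 3) : ZMod 3 :=
  if x3 = 0 then x1 - x2
  else if x3 = 1 then (if x1 = 2 ∧ x2 = 0 then 1 else 0)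
  else (if x1 = 0 ∧ x2 = 2 then 0 else 1)

/-!
Since the decoder recovers `F0` from `(Z1, Z2)`, and `X3` is part of the condition,
`H((Z1, Z2) | F0, X3) = H(Z1, Z2, X3) - H(F0, X3)`. Two inputs `x1, y1` sent to the same message
`Z1` under the same `x3` must give the same value of `f` against every `x2`, so given `X3` the
message `Z1` determines the coordinatewise `≡^{X3}|₁`-class of `X1`, and likewise `Z2` that of `X2`.
Hence `H(Z1, Z2, X3)` is at least the entropy of these classes together with `X3`, which, like
`H(F0, X3)`, is `k` times a single-letter entropy. For `f0` the two single-letter entropies are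
`3 log₂ 3 - 8/9` and `(8/3) log₂ 3 - 16/9`.

Entropies under the uniform distribution are computed as averages over the sample space of
`log₂ (|Ω| / |fibre through ω|)`.
-/

open Finset

section Entropy

variable {Ω Ω' S T : Type*} [Fintype Ω]

noncomputable def fiberCard (W : Ω → S) (ω : Ω) : ℕ := #{ω' | W ω' = W ω}

lemma fiberCard_pos (W : Ω → S) (ω : Ω) : 0 < fiberCard W ω :=
  card_pos.2 ⟨ω, by simp⟩

lemma cast_fiberCard_ne_zero (W : Ω → S) (ω : Ω) : (fiberCard W ω : ℝ) ≠ 0 :=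
  Nat.cast_ne_zero.2 (fiberCard_pos W ω).ne'

lemma uH_eq_sum_fiberCard (W : Ω → S) :
    uH W = ∑ ω, Real.logb 2 (Fintype.card Ω / fiberCard W ω) / Fintype.card Ω := by
  simp only [uH, fiberCard]
  rw [sum_comp (fun s => Real.logb 2 (Fintype.card Ω / #{ω | W ω = s}) / Fintype.card Ω) W]
  refine sum_congr rfl fun s _ => ?_
  rw [nsmul_eq_mul]
  ring

lemma uH_eq_logb_sub (W : Ω → S) [Nonempty Ω] :
    uH W = Real.logb 2 (Fintype.card Ω) -
      (∑ ω, Real.logb 2 (fiberCard W ω)) / Fintype.card Ω := by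
  have hN : (Fintype.card Ω : ℝ) ≠ 0 := by positivity
  rw [uH_eq_sum_fiberCard, ← sum_div, sum_congr rfl fun ω _ =>
    Real.logb_div hN (cast_fiberCard_ne_zero W ω), sum_sub_distrib, sum_const,
    card_univ, nsmul_eq_mul]
  field_simp

lemma uH_eq_of_prod_fiberCard [Nonempty Ω] [DecidableEq S] (W : Ω → S) {P : ℕ}
    (hP : ∏ ω, #{ω' | W ω' = W ω} = P) :
    uH W = Real.logb 2 (Fintype.card Ω) - Real.logb 2 P / Fintype.card Ω := by
  have hfiber : ∀ ω, fiberCard W ω = #{ω' | W ω' = W ω} := fun ω => by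
    rw [fiberCard]; congr
  rw [uH_eq_logb_sub, ← hP, Nat.cast_prod, Real.logb_prod _ _ fun ω _ => ?_]
  · simp only [hfiber]
  · exact hfiber ω ▸ cast_fiberCard_ne_zero W ω

lemma uCondH_eq_sum_fiberCard (W : Ω → S) (V : Ω → T) :
    uCondH W V = ∑ ω, Real.logb 2 (fiberCard V ω / fiberCard (fun ω => (W ω, V ω)) ω) /
      Fintype.card Ω := by
  set F : T × S → ℝ := fun q =>
    Real.logb 2 (#{ω | V ω = q.1} / #{ω | W ω = q.2 ∧ V ω = q.1}) / Fintype.card Ω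
  have hF : ∀ ω, F (V ω, W ω) = Real.logb 2 (fiberCard V ω / fiberCard (fun ω => (W ω, V ω)) ω) /
      Fintype.card Ω := by
    intro ω
    simp only [F, fiberCard, Prod.ext_iff]
  have himage : univ.image (fun ω => (V ω, W ω)) ⊆ univ.image V ×ˢ univ.image W := by
    intro q hq
    obtain ⟨ω, -, rfl⟩ := mem_image.1 hq
    exact mem_product.2 ⟨mem_image_of_mem V (mem_univ ω), mem_image_of_mem W (mem_univ ω)⟩
  simp_rw [← hF]
  rw [sum_comp F (fun ω => (V ω, W ω)), sum_subset himage, uCondH, sum_product]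
  · refine sum_congr rfl fun v _ => sum_congr rfl fun s _ => ?_
    have hcard : #{ω | (V ω, W ω) = (v, s)} = #{ω | W ω = s ∧ V ω = v} := by
      simp only [Prod.ext_iff, and_comm]
    rw [hcard, nsmul_eq_mul]
    ring
  · intro q _ hq
    rw [card_eq_zero.2, zero_smul]
    exact filter_eq_empty_iff.2 fun ω _ hω => hq (hω ▸ mem_image_of_mem _ (mem_univ ω))

lemma uCondH_eq_uH_sub_uH [Nonempty Ω] (W : Ω → S) (V : Ω → T) :
    uCondH W V = uH (fun ω => (W ω, V ω)) - uH V := by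
  rw [uCondH_eq_sum_fiberCard, uH_eq_logb_sub, uH_eq_logb_sub, sub_sub_sub_cancel_left,
    ← sub_div, ← sum_div, ← sum_sub_distrib]
  congr 1
  exact sum_congr rfl fun ω _ =>
    Real.logb_div (cast_fiberCard_ne_zero V ω) (cast_fiberCard_ne_zero _ ω)

lemma uH_le_uH [Nonempty Ω] {W : Ω → S} {U : Ω → T} (h : ∀ ω ω', W ω = W ω' → U ω = U ω') :
    uH U ≤ uH W := by
  rw [uH_eq_logb_sub, uH_eq_logb_sub]
  gcongr with ω
  · norm_num
  · exact_mod_cast fiberCard_pos W ω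
  · exact card_le_card fun ω' hω' => by
      simp only [mem_filter, mem_univ, true_and] at hω' ⊢
      exact h ω' ω hω'

lemma uH_congr [Nonempty Ω] {W : Ω → S} {U : Ω → T} (h : ∀ ω ω', W ω = W ω' ↔ U ω = U ω') :
    uH W = uH U :=
  le_antisymm (uH_le_uH fun ω ω' => (h ω ω').2) (uH_le_uH fun ω ω' => (h ω ω').1)

lemma uH_comp_of_injective [Nonempty Ω] (W : Ω → S) {g : S → T} (hg : g.Injective) :
    uH (fun ω => g (W ω)) = uH W :=
  uH_congr fun _ _ => hg.eq_iff

lemma uH_comp_equiv [Fintype Ω'] (e : Ω' ≃ Ω) (W : Ω → S) : uH (fun ω' => W (e ω')) = uH W := by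
  have hfiber : ∀ ω', fiberCard (fun ω' => W (e ω')) ω' = fiberCard W (e ω') := fun ω' =>
    card_equiv e fun _ => by simp
  rw [uH_eq_sum_fiberCard, uH_eq_sum_fiberCard, Fintype.card_congr e, ← e.sum_comp]
  simp only [hfiber]

lemma uH_prodMap [Fintype Ω'] [Nonempty Ω] [Nonempty Ω'] (W : Ω → S) (W' : Ω' → T) :
    uH (Prod.map W W') = uH W + uH W' := by
  have hfiber : ∀ p : Ω × Ω', fiberCard (Prod.map W W') p = fiberCard W p.1 * fiberCard W' p.2 := by
    intro p
    rw [fiberCard, fiberCard, fiberCard, ← card_product, ← filter_product, univ_product_univ]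
    simp only [Prod.map, Prod.ext_iff]
  have hsum : ∑ p : Ω × Ω', Real.logb 2 (fiberCard (Prod.map W W') p) =
      Fintype.card Ω' * ∑ ω, Real.logb 2 (fiberCard W ω) +
        Fintype.card Ω * ∑ ω', Real.logb 2 (fiberCard W' ω') := by
    have hlog : ∀ p : Ω × Ω', Real.logb 2 (fiberCard (Prod.map W W') p) =
        Real.logb 2 (fiberCard W p.1) + Real.logb 2 (fiberCard W' p.2) := fun p => by
      rw [hfiber, Nat.cast_mul,
        Real.logb_mul (cast_fiberCard_ne_zero W p.1) (cast_fiberCard_ne_zero W' p.2)]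
    simp only [hlog, Fintype.sum_prod_type, sum_add_distrib, sum_const, card_univ, nsmul_eq_mul,
      mul_sum]
  have hN : (Fintype.card Ω : ℝ) ≠ 0 := by positivity
  have hN' : (Fintype.card Ω' : ℝ) ≠ 0 := by positivity
  rw [uH_eq_logb_sub, uH_eq_logb_sub, uH_eq_logb_sub, hsum, Fintype.card_prod, Nat.cast_mul,
    Real.logb_mul hN hN']
  field_simp
  ring

lemma uH_pi {α : Type*} [Fintype α] [Nonempty α] (g : α → S) (k : ℕ) :
    uH (fun w : Fin k → α => fun i => g (w i)) = k * uH g := by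
  induction k with
  | zero =>
    rw [uH_eq_logb_sub]
    simp [fiberCard, Subsingleton.elim _ (default : Fin 0 → α)]
  | succ n ih =>
    rw [Nat.cast_succ, add_mul, one_mul, ← ih, add_comm _ (uH g), ← uH_prodMap,
      ← uH_comp_equiv (Fin.consEquiv fun _ => α) (fun w : Fin (n + 1) → α => fun i => g (w i))]
    refine uH_congr fun p q => ?_
    have hcons : ∀ p : α × (Fin n → α), (fun i => g (Fin.consEquiv (fun _ => α) p i)) =
        Fin.cons (g p.1) fun i => g (p.2 i) := fun p => Fin.comp_cons g p.1 p.2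
    simp only [hcons, Fin.cons_inj, Prod.map, Prod.ext_iff]

lemma uH_pi_triple {α : Type*} [Fintype α] [Nonempty α] (h : α × α × α → S) (k : ℕ) :
    uH (fun ω : (Fin k → α) × (Fin k → α) × (Fin k → α) => fun i => h (ω.1 i, ω.2.1 i, ω.2.2 i)) =
      k * uH h := by
  let e : (Fin k → α × α × α) ≃ (Fin k → α) × (Fin k → α) × (Fin k → α) :=
    (Equiv.arrowProdEquivProdArrow _ _ _).trans
      (Equiv.prodCongr (Equiv.refl _) (Equiv.arrowProdEquivProdArrow _ _ _))
  rw [← uH_pi h k, ← uH_comp_equiv e]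
  rfl

end Entropy

section Code

variable {A B Z : Type*} {k : ℕ} {f : A → A → A → B}

lemma ZECode.eqv1k_of_phi1_eq (c : ZECode A B Z k f) {x1 y1 x3 : Fin k → A}
    (h : c.phi1 x1 (c.phi31 x3) = c.phi1 y1 (c.phi31 x3)) : eqv1k f x3 x1 y1 := fun i x2 => by
  rw [← congrFun (c.zero_error x1 (fun _ => x2) x3) i, h, c.zero_error]

lemma ZECode.eqv2k_of_phi2_eq (c : ZECode A B Z k f) {x2 y2 x3 : Fin k → A}
    (h : c.phi2 x2 (c.phi32 x3) = c.phi2 y2 (c.phi32 x3)) : eqv2k f x3 x2 y2 := fun i x1 => by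
  rw [← congrFun (c.zero_error (fun _ => x1) x2 x3) i, h, c.zero_error]

theorem ZECode.mul_sub_le_uCondH {T : Type*} [Fintype A] [Nonempty A] (c : ZECode A B Z k f)
    (g : A × A × A → T)
    (hg : ∀ a3 x1 x2 y1 y2, eqv1 f a3 x1 y1 → eqv2 f a3 x2 y2 → g (x1, x2, a3) = g (y1, y2, a3)) :
    k * (uH g - uH fun u : A × A × A => (f u.1 u.2.1 u.2.2, u.2.2)) ≤
      uCondH
        (fun ω : (Fin k → A) × (Fin k → A) × (Fin k → A) =>
          (c.phi1 ω.1 (c.phi31 ω.2.2), c.phi2 ω.2.1 (c.phi32 ω.2.2)))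
        (fun ω : (Fin k → A) × (Fin k → A) × (Fin k → A) =>
          ((fun i => f (ω.1 i) (ω.2.1 i) (ω.2.2 i)), ω.2.2)) := by
  set W := fun ω : (Fin k → A) × (Fin k → A) × (Fin k → A) =>
    (c.phi1 ω.1 (c.phi31 ω.2.2), c.phi2 ω.2.1 (c.phi32 ω.2.2))
  have hdecode : uH (fun ω => (W ω, ((fun i => f (ω.1 i) (ω.2.1 i) (ω.2.2 i)), ω.2.2))) =
      uH (fun ω => (W ω, ω.2.2)) := uH_congr fun ω ω' => by
    simp only [← c.zero_error, Prod.mk.injEq]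
    exact ⟨fun h => ⟨h.1, h.2.2⟩, fun h => ⟨h.1, congrArg (fun w => c.psi w.1 w.2) h.1, h.2⟩⟩
  have hclass : k * uH g ≤ uH (fun ω => (W ω, ω.2.2)) := by
    rw [← uH_pi_triple]
    refine uH_le_uH fun ω ω' h => ?_
    obtain ⟨hW, hx3⟩ := Prod.mk.inj h
    obtain ⟨h1, h2⟩ := Prod.mk.inj hW
    rw [← hx3] at h1 h2 ⊢
    funext i
    exact hg _ _ _ _ _ (c.eqv1k_of_phi1_eq h1 i) (c.eqv2k_of_phi2_eq h2 i)
  have hout : uH (fun ω : (Fin k → A) × (Fin k → A) × (Fin k → A) =>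
      ((fun i => f (ω.1 i) (ω.2.1 i) (ω.2.2 i)), ω.2.2)) =
      k * uH fun u : A × A × A => (f u.1 u.2.1 u.2.2, u.2.2) := by
    rw [← uH_pi_triple, ← uH_comp_of_injective _ (Equiv.arrowProdEquivProdArrow _ _ _).injective]
    rfl
  rw [uCondH_eq_uH_sub_uH, hdecode, hout, mul_sub]
  linarith

end Code

/-- `rep1 a3` and `rep2 a3` send each class of `≡^{a3}|₁`, resp. `≡^{a3}|₂`, for `f0` to one
of its elements. -/
def rep1 (a3 x : ZMod 3) : ZMod 3 :=
  if a3 = 0 then x else if a3 = 1 then (if x = 2 then 2 else 0) else (if x = 0 then 0 else 1)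

def rep2 (a3 x : ZMod 3) : ZMod 3 :=
  if a3 = 0 then x else if a3 = 1 then (if x = 0 then 0 else 1) else (if x = 2 then 2 else 0)

def f0Class (u : ZMod 3 × ZMod 3 × ZMod 3) : ZMod 3 × ZMod 3 × ZMod 3 :=
  (rep1 u.2.2 u.1, rep2 u.2.2 u.2.1, u.2.2)

lemma f0Class_eq_of_eqv : ∀ a3 x1 x2 y1 y2 : ZMod 3, eqv1 f0 a3 x1 y1 → eqv2 f0 a3 x2 y2 →
    f0Class (x1, x2, a3) = f0Class (y1, y2, a3) := by
  unfold eqv1 eqv2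
  decide

/- The fibres of `f0Class` have sizes `1` (for `x3 = 0`) and `1, 2, 2, 4` (for `x3 ≠ 0`); those of
`(f0, x3)` have sizes `3` (for `x3 = 0`) and `1, 8` (for `x3 ≠ 0`). -/
lemma uH_f0Class_sub_uH_f0 :
    uH f0Class - uH (fun u : ZMod 3 × ZMod 3 × ZMod 3 => (f0 u.1 u.2.1 u.2.2, u.2.2)) =
      8 / 9 + 1 / 3 * Real.logb 2 3 := by
  rw [uH_eq_of_prod_fiberCard f0Class (P := 2 ^ 24) (by decide),
    uH_eq_of_prod_fiberCard _ (P := 3 ^ 9 * 2 ^ 48) (by decide)]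
  have hcard : Fintype.card (ZMod 3 × ZMod 3 × ZMod 3) = 27 := rfl
  simp only [hcard, Nat.cast_mul, Nat.cast_pow, Nat.cast_ofNat]
  rw [Real.logb_mul (by norm_num) (by norm_num), Real.logb_pow, Real.logb_pow,
    Real.logb_pow, Real.logb_self_eq_one one_lt_two]
  ring

theorem stmt_15_general {Z : Type*} {k : ℕ} (c : ZECode (ZMod 3) (ZMod 3) Z k f0) :
    uCondH
        (fun ω : (Fin k → ZMod 3) × (Fin k → ZMod 3) × (Fin k → ZMod 3) =>
          (c.phi1 ω.1 (c.phi31 ω.2.2), c.phi2 ω.2.1 (c.phi32 ω.2.2)))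
        (fun ω : (Fin k → ZMod 3) × (Fin k → ZMod 3) × (Fin k → ZMod 3) =>
          ((fun i => f0 (ω.1 i) (ω.2.1 i) (ω.2.2 i)), ω.2.2)) ≥
      k * (8 / 9 + (1 / 3) * Real.logb 2 3) := by
  rw [← uH_f0Class_sub_uH_f0]
  exact c.mul_sub_le_uCondH f0Class f0Class_eq_of_eqv

/-- For any zero-error code for `f0`, with `(X1, X2, X3)` uniform on
`(GF(3)^k)³`, `H((Z1, Z2) | (F0, X3)) ≥ k·(8/9 + (1/3)·log₂ 3)`. -/
theorem stmt_15 {Z : Type*} [Fintype Z] (hZ : 1 < Fintype.card Z)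
    {k : ℕ} (hk : 1 ≤ k) (c : ZECode (ZMod 3) (ZMod 3) Z k f0) :
    uCondH
        (fun ω : (Fin k → ZMod 3) × (Fin k → ZMod 3) × (Fin k → ZMod 3) =>
          (c.phi1 ω.1 (c.phi31 ω.2.2), c.phi2 ω.2.1 (c.phi32 ω.2.2)))
        (fun ω : (Fin k → ZMod 3) × (Fin k → ZMod 3) × (Fin k → ZMod 3) =>
          ((fun i => f0 (ω.1 i) (ω.2.1 i) (ω.2.2 i)), ω.2.2)) ≥
      k * (8 / 9 + (1 / 3) * Real.logb 2 3) :=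
  stmt_15_general c
end
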